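/- Let d, T be natural numbers with d ≥ 1, let λ > 0 and B ≥ 0 be reals, let x_0, …, x_{T−1} ∈ ℝ^d satisfy ‖x_t‖₂ ≤ B for all t < T, and let c_0, …, c_{T−1} ≥ 0 be reals. Define the matrices Σ_0 = λ·I and Σ_{t+1} = Σ_t + x_t x_tᵀ + c_t·I for t < T, and set w_t² = x_tᵀ Σ_t⁻¹ x_t. If β ≥ 0 and r_0, …, r_{T−1} are reals satisfying 0 ≤ r_t and r_t² ≤ 4·β·min(w_t², 1) for every t < T, then the cumulative regret satisfies Σ_{t=0}^{T−1} r_t ≤ √(8·T·β·d·log(1 + (T·B² + d·Σ_{t=0}^{T−1} c_t)/(d·λ))). -/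

import Mathlib

/-!
By the matrix determinant lemma, `det (Σ + x xᵀ) = det Σ · (1 + xᵀ Σ⁻¹ x)`, and adding a positive
semidefinite matrix never decreases the determinant, so `∏ₜ (1 + wₜ²) ≤ det Σ_T / λ^d`.
AM–GM on the eigenvalues gives `det Σ_T ≤ (tr Σ_T / d)^d`, and the trace grows by at most
`B² + d cₜ` per step. Since `min u 1 ≤ 2 log (1 + u)`, this bounds `∑ₜ rₜ²` by
`8 β d log (1 + (T B² + d ∑ cₜ) / (d λ))`, and Cauchy–Schwarz gives `∑ₜ rₜ ≤ √(T ∑ₜ rₜ²)`.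
-/

open Matrix Finset

theorem Real.prod_le_sum_div_card_pow {ι : Type*} (s : Finset ι) {f : ι → ℝ}
    (hf : ∀ i ∈ s, 0 ≤ f i) : ∏ i ∈ s, f i ≤ ((∑ i ∈ s, f i) / #s) ^ #s := by
  rcases s.eq_empty_or_nonempty with rfl | hs
  · simp
  have hcard : (0 : ℝ) < #s := by exact_mod_cast hs.card_pos
  have amgm := Real.geom_mean_le_arith_mean s (fun _ ↦ 1) f (fun _ _ ↦ zero_le_one)
    (by simpa using hcard) hf
  simp only [Real.rpow_one, sum_const, nsmul_eq_mul, mul_one, one_mul] at amgm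
  calc ∏ i ∈ s, f i = ((∏ i ∈ s, f i) ^ ((#s : ℝ)⁻¹)) ^ #s := by
        rw [← Real.rpow_natCast, ← Real.rpow_mul (prod_nonneg hf), inv_mul_cancel₀ hcard.ne',
          Real.rpow_one]
    _ ≤ ((∑ i ∈ s, f i) / #s) ^ #s :=
        pow_le_pow_left₀ (Real.rpow_nonneg (prod_nonneg hf) _) amgm _

open scoped ComplexOrder MatrixOrder in
theorem Matrix.PosDef.of_le {n 𝕜 : Type*} [RCLike 𝕜] {A B : Matrix n n 𝕜} (hA : A.PosDef)
    (h : A ≤ B) : B.PosDef := by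
  simpa using hA.add_posSemidef (le_iff.mp h)

section
variable {n : Type*} [Fintype n] [DecidableEq n]

theorem Matrix.PosSemidef.det_le_trace_div_card_pow {A : Matrix n n ℝ} (hA : A.PosSemidef) :
    A.det ≤ (A.trace / Fintype.card n) ^ Fintype.card n := by
  have := Real.prod_le_sum_div_card_pow univ fun i _ ↦ hA.eigenvalues_nonneg i
  simpa [hA.1.det_eq_prod_eigenvalues, hA.1.trace_eq_sum_eigenvalues] using this

theorem Matrix.det_add_vecMulVec {R : Type*} [CommRing R] {A : Matrix n n R} (hA : IsUnit A.det)
    (u v : n → R) : (A + vecMulVec u v).det = A.det * (1 + v ⬝ᵥ A⁻¹ *ᵥ u) := by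
  rw [vecMulVec_eq Unit, det_add_replicateCol_mul_replicateRow hA]
  congr 1
  simp [det_unique, mul_apply, dotProduct, mulVec, Finset.mul_sum, Finset.sum_mul, mul_assoc]
  exact Finset.sum_comm

theorem Matrix.PosDef.dotProduct_inv_mulVec_nonneg {A : Matrix n n ℝ} (hA : A.PosDef)
    (x : n → ℝ) : 0 ≤ x ⬝ᵥ A⁻¹ *ᵥ x := by
  simpa using hA.inv.posSemidef.dotProduct_mulVec_nonneg x

theorem Matrix.PosDef.det_add_vecMulVec_self {A : Matrix n n ℝ} (hA : A.PosDef) (x : n → ℝ) :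
    (A + vecMulVec x x).det = A.det * (1 + x ⬝ᵥ A⁻¹ *ᵥ x) :=
  det_add_vecMulVec hA.det_pos.ne'.isUnit x x

theorem Matrix.PosDef.det_le_det_add_vecMulVec_self {A : Matrix n n ℝ} (hA : A.PosDef)
    (x : n → ℝ) : A.det ≤ (A + vecMulVec x x).det := by
  rw [hA.det_add_vecMulVec_self]
  exact le_mul_of_one_le_right hA.det_pos.le
    (le_add_of_nonneg_right (hA.dotProduct_inv_mulVec_nonneg x))

open scoped MatrixOrder in
theorem Matrix.PosDef.det_le_det_of_le {A B : Matrix n n ℝ} (hA : A.PosDef) (h : A ≤ B) :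
    A.det ≤ B.det := by
  -- `B - A` is a sum of rank-one terms `v vᵀ`, each of which can only increase the determinant.
  obtain ⟨m, v, hv⟩ := posSemidef_iff_eq_sum_vecMulVec.mp (le_iff.mp h)
  have key : ∀ s : Finset (Fin m), A.det ≤ (A + ∑ i ∈ s, vecMulVec (v i) (v i)).det := by
    intro s
    induction s using Finset.induction_on with
    | empty => simp
    | insert i s hi ih =>
      have hpos : (A + ∑ i ∈ s, vecMulVec (v i) (v i)).PosDef :=
        hA.add_posSemidef <| posSemidef_sum s fun i _ ↦ by
          simpa using posSemidef_vecMulVec_self_star (v i)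
      rw [sum_insert hi, add_left_comm, add_comm (vecMulVec _ _)]
      exact ih.trans (hpos.det_le_det_add_vecMulVec_self (v i))
  rw [← add_sub_cancel A B, hv]
  simpa using key univ

theorem Matrix.PosDef.log_det_div_det_smul_one_le {A : Matrix n n ℝ} (hA : A.PosDef)
    {lam K : ℝ} (hlam : 0 < lam) (hK : A.trace / (Fintype.card n * lam) ≤ K) :
    Real.log (A.det / (lam • (1 : Matrix n n ℝ)).det) ≤ Fintype.card n * Real.log K := by
  rw [← Real.log_pow]
  refine Real.log_le_log (div_pos hA.det_pos (PosDef.one.smul hlam).det_pos) ?_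
  calc A.det / (lam • (1 : Matrix n n ℝ)).det
      = A.det / lam ^ Fintype.card n := by rw [det_smul, det_one, mul_one]
    _ ≤ (A.trace / Fintype.card n) ^ Fintype.card n / lam ^ Fintype.card n :=
        div_le_div_of_nonneg_right hA.posSemidef.det_le_trace_div_card_pow (by positivity)
    _ = (A.trace / (Fintype.card n * lam)) ^ Fintype.card n := by
        rw [div_mul_eq_div_div, div_pow (A.trace / _)]
    _ ≤ K ^ Fintype.card n :=
        pow_le_pow_left₀ (div_nonneg hA.posSemidef.trace_nonneg (by positivity)) hK _

end

theorem Real.min_one_le_two_mul_log_one_add {u : ℝ} (hu : 0 ≤ u) :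
    min u 1 ≤ 2 * Real.log (1 + u) := by
  rcases le_total u 1 with h | h
  · have hlog := Real.one_sub_inv_le_log_of_pos (by linarith : 0 < 1 + u)
    have : u / 2 ≤ 1 - (1 + u)⁻¹ := by
      rw [inv_eq_one_div, one_sub_div (by positivity), add_sub_cancel_left]
      exact div_le_div_of_nonneg_left hu (by positivity) (by linarith)
    rw [min_eq_left h]
    linarith
  · have := Real.log_le_log (by norm_num) (by linarith : (2 : ℝ) ≤ 1 + u)
    rw [min_eq_right h]
    linarith [Real.log_two_gt_d9]

section EllipticalPotential

open scoped MatrixOrder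

variable {n : Type*} [Fintype n] {S : ℕ → Matrix n n ℝ} {x : ℕ → n → ℝ} {T : ℕ}

theorem posDef_of_add_vecMulVec_le (h0 : (S 0).PosDef)
    (hS : ∀ t < T, S t + vecMulVec (x t) (x t) ≤ S (t + 1)) : ∀ t ≤ T, (S t).PosDef := by
  intro t ht
  induction t with
  | zero => exact h0
  | succ t ih =>
    have hx : (vecMulVec (x t) (x t)).PosSemidef := by
      simpa using posSemidef_vecMulVec_self_star (x t)
    exact ((ih (by omega)).add_posSemidef hx).of_le (hS t (by omega))

theorem det_mul_prod_one_add_le_det [DecidableEq n] (h0 : (S 0).PosDef)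
    (hS : ∀ t < T, S t + vecMulVec (x t) (x t) ≤ S (t + 1)) :
    (S 0).det * ∏ t ∈ range T, (1 + x t ⬝ᵥ (S t)⁻¹ *ᵥ x t) ≤ (S T).det := by
  suffices ∀ s ≤ T, (S 0).det * ∏ t ∈ range s, (1 + x t ⬝ᵥ (S t)⁻¹ *ᵥ x t) ≤ (S s).det from
    this T le_rfl
  intro s hs
  induction s with
  | zero => simp
  | succ s ih =>
    have hSs := posDef_of_add_vecMulVec_le h0 hS s (by omega)
    calc (S 0).det * ∏ t ∈ range (s + 1), (1 + x t ⬝ᵥ (S t)⁻¹ *ᵥ x t)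
        = (S 0).det * (∏ t ∈ range s, (1 + x t ⬝ᵥ (S t)⁻¹ *ᵥ x t)) *
            (1 + x s ⬝ᵥ (S s)⁻¹ *ᵥ x s) := by rw [prod_range_succ, mul_assoc]
      _ ≤ (S s).det * (1 + x s ⬝ᵥ (S s)⁻¹ *ᵥ x s) :=
        mul_le_mul_of_nonneg_right (ih (by omega))
          (by linarith [hSs.dotProduct_inv_mulVec_nonneg (x s)])
      _ = (S s + vecMulVec (x s) (x s)).det := (hSs.det_add_vecMulVec_self (x s)).symm
      _ ≤ (S (s + 1)).det := by
        refine PosDef.det_le_det_of_le ?_ (hS s (by omega))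
        exact hSs.add_posSemidef (by simpa using posSemidef_vecMulVec_self_star (x s))

theorem sum_min_one_le_two_mul_log_det_div [DecidableEq n] (h0 : (S 0).PosDef)
    (hS : ∀ t < T, S t + vecMulVec (x t) (x t) ≤ S (t + 1)) :
    ∑ t ∈ range T, min (x t ⬝ᵥ (S t)⁻¹ *ᵥ x t) 1 ≤ 2 * Real.log ((S T).det / (S 0).det) := by
  have hw : ∀ t ∈ range T, 0 ≤ x t ⬝ᵥ (S t)⁻¹ *ᵥ x t := fun t ht ↦
    (posDef_of_add_vecMulVec_le h0 hS t (mem_range.mp ht).le).dotProduct_inv_mulVec_nonneg (x t)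
  calc ∑ t ∈ range T, min (x t ⬝ᵥ (S t)⁻¹ *ᵥ x t) 1
      ≤ ∑ t ∈ range T, 2 * Real.log (1 + x t ⬝ᵥ (S t)⁻¹ *ᵥ x t) :=
        sum_le_sum fun t ht ↦ Real.min_one_le_two_mul_log_one_add (hw t ht)
    _ = 2 * Real.log (∏ t ∈ range T, (1 + x t ⬝ᵥ (S t)⁻¹ *ᵥ x t)) := by
        rw [← mul_sum, Real.log_prod fun t ht ↦ by linarith [hw t ht]]
    _ ≤ 2 * Real.log ((S T).det / (S 0).det) := by
        gcongr
        · exact prod_pos fun t ht ↦ by linarith [hw t ht]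
        · exact (le_div_iff₀' h0.det_pos).mpr (det_mul_prod_one_add_le_det h0 hS)

end EllipticalPotential

theorem trace_eq_trace_zero_add_sum {n : Type*} [Fintype n] [DecidableEq n]
    {S : ℕ → Matrix n n ℝ} {x : ℕ → n → ℝ} {c : ℕ → ℝ} {T : ℕ}
    (hS : ∀ t < T, S (t + 1) = S t + vecMulVec (x t) (x t) + c t • 1) :
    (S T).trace = (S 0).trace + ∑ t ∈ range T, (x t ⬝ᵥ x t + Fintype.card n * c t) := by
  rw [← sub_eq_iff_eq_add', ← sum_range_sub fun t ↦ (S t).trace]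
  refine sum_congr rfl fun t ht ↦ ?_
  rw [hS t (mem_range.mp ht)]
  simp only [trace_add, trace_vecMulVec, trace_smul, trace_one, smul_eq_mul]
  ring

theorem trace_div_le_one_add {n : Type*} [Fintype n] [DecidableEq n] {S : ℕ → Matrix n n ℝ}
    {x : ℕ → n → ℝ} {c : ℕ → ℝ} {T : ℕ} {lam B : ℝ} (hlam : 0 < lam) (hS0 : S 0 = lam • 1)
    (hS : ∀ t < T, S (t + 1) = S t + vecMulVec (x t) (x t) + c t • 1)
    (hx : ∀ t < T, x t ⬝ᵥ x t ≤ B ^ 2) :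
    (S T).trace / (Fintype.card n * lam) ≤
      1 + (T * B ^ 2 + Fintype.card n * ∑ t ∈ range T, c t) / (Fintype.card n * lam) := by
  have htrace : (S T).trace ≤
      Fintype.card n * lam + (T * B ^ 2 + Fintype.card n * ∑ t ∈ range T, c t) := by
    have := sum_le_card_nsmul _ _ _ fun t ht ↦ hx t (mem_range.mp ht)
    rw [trace_eq_trace_zero_add_sum hS, hS0, trace_smul, trace_one, sum_add_distrib, ← mul_sum]
    simp only [card_range, nsmul_eq_mul, smul_eq_mul] at this ⊢
    linarith
  rcases (Fintype.card n).eq_zero_or_pos with hn | hn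
  · simp [hn]
  · rw [div_le_iff₀ (by positivity), add_mul, div_mul_cancel₀ _ (by positivity)]
    linarith

theorem cumulative_regret_bound_general
    (d T : ℕ) (lam B : ℝ) (hlam : 0 < lam)
    (x : ℕ → Fin d → ℝ) (hx : ∀ t < T, Real.sqrt (∑ i, x t i ^ 2) ≤ B)
    (c : ℕ → ℝ) (hc : ∀ t < T, 0 ≤ c t)
    (S : ℕ → Matrix (Fin d) (Fin d) ℝ)
    (hS0 : S 0 = lam • (1 : Matrix (Fin d) (Fin d) ℝ))
    (hSs : ∀ t < T, S (t + 1) =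
      S t + vecMulVec (x t) (x t) + c t • (1 : Matrix (Fin d) (Fin d) ℝ))
    (β : ℝ) (hβ : 0 ≤ β) (r : ℕ → ℝ)
    (hr : ∀ t < T, r t ^ 2 ≤ 4 * β * min (x t ⬝ᵥ (S t)⁻¹ *ᵥ x t) 1) :
    ∑ t ∈ Finset.range T, r t ≤
      Real.sqrt (8 * T * β * d *
        Real.log (1 + ((T : ℝ) * B ^ 2 + d * ∑ t ∈ Finset.range T, c t) / (d * lam))) := by
  set Q := ((T : ℝ) * B ^ 2 + d * ∑ t ∈ Finset.range T, c t) / (d * lam)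
  have h0 : (S 0).PosDef := hS0 ▸ PosDef.one.smul hlam
  open scoped MatrixOrder in
  have hS : ∀ t < T, S t + vecMulVec (x t) (x t) ≤ S (t + 1) := fun t ht ↦ by
    rw [le_iff, hSs t ht, add_sub_cancel_left]
    exact PosSemidef.one.smul (hc t ht)
  have hxB : ∀ t < T, x t ⬝ᵥ x t ≤ B ^ 2 := fun t ht ↦ by
    simpa [dotProduct, sq] using (Real.sqrt_le_iff.mp (hx t ht)).2
  have htrace : (S T).trace / (d * lam) ≤ 1 + Q := by
    simpa using trace_div_le_one_add hlam hS0 hSs hxB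
  have hlogdet : Real.log ((S T).det / (S 0).det) ≤ d * Real.log (1 + Q) := by
    simpa [hS0] using
      (posDef_of_add_vecMulVec_le h0 hS T le_rfl).log_det_div_det_smul_one_le hlam (by simpa)
  have hsq : ∑ t ∈ range T, r t ^ 2 ≤ 8 * β * d * Real.log (1 + Q) := by
    calc ∑ t ∈ range T, r t ^ 2 ≤ 4 * β * ∑ t ∈ range T, min (x t ⬝ᵥ (S t)⁻¹ *ᵥ x t) 1 := by
          rw [mul_sum]; exact sum_le_sum fun t ht ↦ hr t (mem_range.mp ht)
      _ ≤ 4 * β * (2 * (d * Real.log (1 + Q))) := by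
          gcongr
          exact (sum_min_one_le_two_mul_log_det_div h0 hS).trans (by linarith)
      _ = 8 * β * d * Real.log (1 + Q) := by ring
  calc ∑ t ∈ range T, r t ≤ Real.sqrt (T * ∑ t ∈ range T, r t ^ 2) :=
        Real.le_sqrt_of_sq_le (by simpa using sq_sum_le_card_mul_sum_sq (s := range T) (f := r))
    _ ≤ Real.sqrt (T * (8 * β * d * Real.log (1 + Q))) := by gcongr
    _ = Real.sqrt (8 * T * β * d * Real.log (1 + Q)) := by ring_nf

theorem cumulative_regret_bound
    (d T : ℕ) (hd : 1 ≤ d) (lam B : ℝ) (hlam : 0 < lam) (hB : 0 ≤ B)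
    (x : ℕ → Fin d → ℝ) (hx : ∀ t < T, Real.sqrt (∑ i, x t i ^ 2) ≤ B)
    (c : ℕ → ℝ) (hc : ∀ t < T, 0 ≤ c t)
    (S : ℕ → Matrix (Fin d) (Fin d) ℝ)
    (hS0 : S 0 = lam • (1 : Matrix (Fin d) (Fin d) ℝ))
    (hSs : ∀ t < T, S (t + 1) =
      S t + vecMulVec (x t) (x t) + c t • (1 : Matrix (Fin d) (Fin d) ℝ))
    (β : ℝ) (hβ : 0 ≤ β) (r : ℕ → ℝ)
    (hr0 : ∀ t < T, 0 ≤ r t)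
    (hr : ∀ t < T, r t ^ 2 ≤ 4 * β * min (x t ⬝ᵥ (S t)⁻¹ *ᵥ x t) 1) :
    ∑ t ∈ Finset.range T, r t ≤
      Real.sqrt (8 * T * β * d *
        Real.log (1 + ((T : ℝ) * B ^ 2 + d * ∑ t ∈ Finset.range T, c t) / (d * lam))) :=
  cumulative_regret_bound_general d T lam B hlam x hx c hc S hS0 hSs β hβ r hr
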